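/- Suppose (W,S) is a Coxeter system of type Λ, α is a link of dimension r ≥ 2, and σ ∈ [α] is such that both ⟦2r−3,2r−1⟧ and ⟦2r−1,2r+1⟧ are braid shadows of σ. Then sigbar_r(σ) and sigbar_r(b^r(σ)) are convex subsets of the vertices of the braid graph B(α). -/

import Mathlib

open scoped Classical

namespace Braid

variable {B : Type*}

/-- A Coxeter matrix is *simply laced* if all of its entries are 1, 2 or 3
(in particular, no entry is `0`, which encodes `m(s,t) = ∞`). -/
def SimplyLaced (M : CoxeterMatrix B) : Prop := ∀ s t : B, 1 ≤ M s t ∧ M s t ≤ 3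

/-- The Coxeter graph has an edge between `s` and `t` iff `m(s,t) ≥ 3`
(where the entry `0` encodes `∞`). -/
def CoxEdge (M : CoxeterMatrix B) (s t : B) : Prop := M s t = 0 ∨ 3 ≤ M s t

/-- A Coxeter matrix is *triangle free* if its Coxeter graph contains no three-cycles. -/
def TriangleFree (M : CoxeterMatrix B) : Prop :=
  ∀ s t u : B, ¬ (CoxEdge M s t ∧ CoxEdge M t u ∧ CoxEdge M s u)

/-- A Coxeter system is of *type Λ* if it is simply laced and triangle free. -/
def TypeLambda (M : CoxeterMatrix B) : Prop := SimplyLaced M ∧ TriangleFree M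

/-- `y` is obtained from `x` by replacing the factor `s t s` occupying the (0-based)
positions `p, p+1, p+2` by `t s t`, where `m(s,t) = 3`. -/
def BraidMoveAt (M : CoxeterMatrix B) (x y : List B) (p : ℕ) : Prop :=
  ∃ s t : B, M s t = 3 ∧
    x = x.take p ++ [s, t, s] ++ x.drop (p + 3) ∧
    y = x.take p ++ [t, s, t] ++ x.drop (p + 3)

/-- `x` and `y` differ by a single braid move (applied to `x`). -/
def BraidMove (M : CoxeterMatrix B) (x y : List B) : Prop := ∃ p, BraidMoveAt M x y p

/-- Two words are *braid equivalent* if one is obtained from the other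
by a sequence of braid moves. -/
def BraidEquiv (M : CoxeterMatrix B) : List B → List B → Prop :=
  Relation.ReflTransGen (BraidMove M)

/-- The braid class of `α`. -/
def braidClass (M : CoxeterMatrix B) (α : List B) : Set (List B) := {x | BraidEquiv M α x}

/-- The braid graph of `α`: vertices are the members of the braid class of `α`, with two
vertices adjacent iff they differ by a single braid move. -/
def braidGraph (M : CoxeterMatrix B) (α : List B) : SimpleGraph (braidClass M α) :=
  SimpleGraph.fromRel (fun x y => BraidMove M x.1 y.1)

/-- `c` is the (1-based) center of a braid shadow of `β`; that is, the interval of 1-based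
positions `⟦c-1, c+1⟧` is a braid shadow of `β`. -/
def ShadowCenter (M : CoxeterMatrix B) (β : List B) (c : ℕ) : Prop :=
  2 ≤ c ∧ ∃ s t : B, M s t = 3 ∧ β = β.take (c - 2) ++ [s, t, s] ++ β.drop (c + 1)

/-- The set of (1-based) centers of the braid shadows of the braid class `[α]`. -/
def classCenters (M : CoxeterMatrix B) (α : List B) : Set ℕ :=
  {c | ∃ β ∈ braidClass M α, ShadowCenter M β c}

/-- The dimension of `α`: the number of braid shadows of `[α]`. -/
noncomputable def braidDim (M : CoxeterMatrix B) (α : List B) : ℕ :=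
  (classCenters M α).ncard

/-- The (1-based) center of the `i`-th braid shadow of `[α]`, the braid shadows being
numbered `1, …, braidDim M α` from left to right. -/
noncomputable def nthCenter (M : CoxeterMatrix B) (α : List B) (i : ℕ) : ℕ :=
  Nat.nth (· ∈ classCenters M α) (i - 1)

/-- The `i`-th entry of the signature of `x ∈ [α]`: the letter of `x` appearing in the
center of the `i`-th braid shadow of `[α]`. -/
noncomputable def sig (M : CoxeterMatrix B) (α x : List B) (i : ℕ) : Option B :=
  x[nthCenter M α i - 1]?

/-- `sigbar M α x i` is the set of members of `[α]` whose signature agrees with that of `x`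
in position `i`. -/
noncomputable def sigbar (M : CoxeterMatrix B) (α x : List B) (i : ℕ) :
    Set (braidClass M α) :=
  {y | sig M α y.1 i = sig M α x i}

/-- `x` and `y` differ by a single braid move occurring in the `j`-th braid shadow
of `[α]` (i.e. the edge `{x,y}` of the braid graph is labeled by `j`). -/
noncomputable def EdgeLabeled (M : CoxeterMatrix B) (α x y : List B) (j : ℕ) : Prop :=
  1 ≤ j ∧ j ≤ braidDim M α ∧
    (BraidMoveAt M x y (nthCenter M α j - 2) ∨ BraidMoveAt M y x (nthCenter M α j - 2))

/-- `x` and `y` differ by a single braid move occurring in the braid shadow with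
(1-based) center `c`. -/
def MoveAtCenter (M : CoxeterMatrix B) (x y : List B) (c : ℕ) : Prop :=
  BraidMoveAt M x y (c - 2) ∨ BraidMoveAt M y x (c - 2)

/-- `BraidSeq M α js x y` : the list `js` of braid-shadow numbers records a braid sequence
transforming `x` into `y`, each move being applied in the indicated braid shadow of `[α]`. -/
noncomputable def BraidSeq (M : CoxeterMatrix B) (α : List B) :
    List ℕ → List B → List B → Prop
  | [], x, y => x = y
  | j :: js, x, y => ∃ z, EdgeLabeled M α x z j ∧ BraidSeq M α js z y

/-- A braid sequence from `x` to `y` is *minimal* if no shorter braid sequence from `x`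
to `y` exists. -/
noncomputable def MinimalBraidSeq (M : CoxeterMatrix B) (α : List B)
    (js : List ℕ) (x y : List B) : Prop :=
  BraidSeq M α js x y ∧ ∀ ls : List ℕ, BraidSeq M α ls x y → js.length ≤ ls.length

/-- `Δ(sig(α), sig(β))`: the number of positions at which the signatures of `α` and `β`
differ. -/
noncomputable def sigDelta (M : CoxeterMatrix B) (α β : List B) : ℕ :=
  {i | 1 ≤ i ∧ i ≤ braidDim M α ∧ sig M α α i ≠ sig M α β i}.ncard

/-- A reduced expression is a *link* if it has length 1, or it has odd length `m` and the
braid shadows of its braid class are exactly `⟦1,3⟧, ⟦3,5⟧, …, ⟦m-2,m⟧`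
(equivalently, the shadow centers are exactly the even numbers `2, 4, …, m-1`). -/
def IsLink (M : CoxeterMatrix B) (α : List B) : Prop :=
  1 ≤ α.length ∧
    (α.length = 1 ∨ (Odd α.length ∧
      classCenters M α = {c | Even c ∧ 2 ≤ c ∧ c + 1 ≤ α.length}))

/-- `maj M α β γ i`: the majority among the `i`-th signature entries of `α`, `β`, `γ`. -/
noncomputable def maj (M : CoxeterMatrix B) (α β γ : List B) (i : ℕ) : Option B :=
  if sig M α α i = sig M α β i ∨ sig M α α i = sig M α γ i then sig M α α i
  else sig M α β i

/-- `sigbarPair M α x y`: the set of members of `[α]` whose signature agrees with the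
common signature entries of `x` and `y`. -/
noncomputable def sigbarPair (M : CoxeterMatrix B) (α x y : List B) :
    Set (braidClass M α) :=
  {z | ∀ i : ℕ, 1 ≤ i → i ≤ braidDim M α →
    sig M α x i = sig M α y i → sig M α z.1 i = sig M α x i}

/-! ### Graph-theoretic notions -/

/-- A set `U` of vertices of a graph is *convex* if every vertex on every geodesic
(shortest path) between two vertices of `U` belongs to `U`. -/
def GraphConvex {V : Type*} (G : SimpleGraph V) (U : Set V) : Prop :=
  ∀ u ∈ U, ∀ v ∈ U, ∀ p : G.Walk u v, p.length = G.dist u v → ∀ x ∈ p.support, x ∈ U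

/-- The interval `I(u,v)`: the set of vertices lying on some geodesic between `u` and `v`. -/
def interval {V : Type*} (G : SimpleGraph V) (u v : V) : Set V :=
  {x | ∃ p : G.Walk u v, p.length = G.dist u v ∧ x ∈ p.support}

/-- A connected graph is *median* if any three vertices admit a unique median. -/
def IsMedianGraph {V : Type*} (G : SimpleGraph V) : Prop :=
  G.Connected ∧ ∀ u v w : V,
    ∃! x, x ∈ interval G u v ∩ interval G u w ∩ interval G v w

/-- The hypercube of dimension `n`: vertices are binary strings of length `n`, adjacent
iff they differ in exactly one digit. -/
def hypercube (n : ℕ) : SimpleGraph (Fin n → Bool) :=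
  SimpleGraph.fromRel (fun x y => ∃! i, x i ≠ y i)

/-- A graph is a *partial cube* if it admits an isometric embedding into some hypercube. -/
def IsPartialCube {V : Type*} (G : SimpleGraph V) : Prop :=
  ∃ (n : ℕ) (f : V → Fin n → Bool),
    ∀ u v : V, (hypercube n).dist (f u) (f v) = G.dist u v

/-- The isometric dimension of a graph: the minimal dimension of a hypercube into which it
isometrically embeds. -/
noncomputable def isoDim {V : Type*} (G : SimpleGraph V) : ℕ :=
  sInf {n | ∃ f : V → Fin n → Bool,
    ∀ u v : V, (hypercube n).dist (f u) (f v) = G.dist u v}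

/-- The semicube `W_{uv}` : the set of vertices strictly closer to `u` than to `v`. -/
def semicube {V : Type*} (G : SimpleGraph V) (u v : V) : Set V :=
  {w | G.dist w u < G.dist w v}

/-!
Every braid shadow in the class of a link of length `2r + 1` has an even center, so braid moves
only occur in the windows `⟦2i - 1, 2i + 1⟧`, each of them changes the letter at the center
`2i` and no other center, and `sig_r` reads the letter at position `2r`. The heart of the proof
is the distance formula: in type Λ the braid-graph distance between two words of such a class
is the number of centers at which they differ. It is proved by induction on the length, through
the prefixes of length `2r - 1`. Two words with the same letter at position `2r` are joined by
a braid sequence avoiding the last window: two moves in the last window enclosing moves in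
lower windows can be replaced, by the induction hypothesis, by no more moves in lower windows.
Two words with different letters there are joined through a word one move away from one of
them: the last four letters of the words in the class are `ρefe`, `eρfe`, `ρfef` or `fρef`, and
triangle-freeness excludes that both `eρfe` and `fρef` occur. By the distance formula, a
geodesic through a word with another letter at a center `c` would change that letter twice, two
moves more than the number of differing centers; hence `{x | x_c = o}` is convex.
-/

variable {M : CoxeterMatrix B}

lemma take_drop_eq_of_getElem? {z L : List B} {i : ℕ}
    (h : ∀ j < L.length, z[i + j]? = L[j]?) : (z.drop i).take L.length = L := by
  apply List.ext_getElem?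
  intro j
  rw [List.getElem?_take, List.getElem?_drop]
  split_ifs with hj
  · exact h j hj
  · exact (List.getElem?_eq_none (by omega)).symm

lemma eq_take_append_triple_append_drop {z : List B} {i : ℕ} {a b c : B}
    (h0 : z[i]? = some a) (h1 : z[i + 1]? = some b) (h2 : z[i + 2]? = some c) :
    z = z.take i ++ [a, b, c] ++ z.drop (i + 3) := by
  have h : (z.drop i).take [a, b, c].length = [a, b, c] := take_drop_eq_of_getElem? fun j hj => by
    simp only [List.length_cons, List.length_nil] at hj
    interval_cases j
    exacts [h0, h1, h2]
  conv_lhs => rw [← List.take_append_drop (i + 3) z, List.take_add]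
  exact congrArg (z.take i ++ · ++ _) h

lemma getElem?_append_triple (A C : List B) (a b c : B) (i : ℕ) :
    (A ++ [a, b, c] ++ C)[i]? =
      if i < A.length then A[i]? else if i = A.length then some a
      else if i = A.length + 1 then some b else if i = A.length + 2 then some c
      else C[i - (A.length + 3)]? := by
  rw [List.append_assoc, List.getElem?_append]
  split_ifs <;> subst_vars <;> simp_all
  obtain ⟨k, rfl⟩ : ∃ k, i = A.length + 3 + k := ⟨i - (A.length + 3), by omega⟩
  simp [show A.length + 3 + k - A.length = k + 3 by omega]

/-! ### Braid moves -/

structure BraidMoveSpec (M : CoxeterMatrix B) (x y : List B) (p : ℕ) (s t : B) : Prop where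
  m_eq : M s t = 3
  le_length : p + 3 ≤ x.length
  length_eq : y.length = x.length
  hx0 : x[p]? = some s
  hx1 : x[p + 1]? = some t
  hx2 : x[p + 2]? = some s
  hy0 : y[p]? = some t
  hy1 : y[p + 1]? = some s
  hy2 : y[p + 2]? = some t
  outside : ∀ i, i < p ∨ p + 2 < i → y[i]? = x[i]?

lemma braidMoveSpec_append (A C : List B) {s t : B} (h : M s t = 3) :
    BraidMoveSpec M (A ++ [s, t, s] ++ C) (A ++ [t, s, t] ++ C) A.length s t := by
  refine ⟨h, by simp, by simp, ?_, ?_, ?_, ?_, ?_, ?_, fun i hi => ?_⟩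
  all_goals
    rw [getElem?_append_triple]
    try rw [getElem?_append_triple]
    split_ifs <;> first | rfl | omega

lemma braidMoveAt_iff {x y : List B} {p : ℕ} :
    BraidMoveAt M x y p ↔ ∃ s t, BraidMoveSpec M x y p s t := by
  constructor
  · rintro ⟨s, t, hM, hx, hy⟩
    have hp : p ≤ x.length := by
      have := congrArg List.length hx
      simp at this
      omega
    have h := braidMoveSpec_append (x.take p) (x.drop (p + 3)) hM
    rw [← hx, ← hy, List.length_take_of_le hp] at h
    exact ⟨s, t, h⟩
  · rintro ⟨s, t, d⟩
    have hy := eq_take_append_triple_append_drop d.hy0 d.hy1 d.hy2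
    have htake : y.take p = x.take p := List.ext_getElem? fun i => by
      rw [List.getElem?_take, List.getElem?_take]
      split_ifs with hi
      exacts [d.outside i (.inl hi), rfl]
    have hdrop : y.drop (p + 3) = x.drop (p + 3) := List.ext_getElem? fun i => by
      rw [List.getElem?_drop, List.getElem?_drop]
      exact d.outside _ (.inr (by omega))
    refine ⟨s, t, d.m_eq, eq_take_append_triple_append_drop d.hx0 d.hx1 d.hx2, ?_⟩
    rwa [htake, hdrop] at hy

lemma braidMoveAt_append (A C : List B) {s t : B} (h : M s t = 3) :
    BraidMoveAt M (A ++ [s, t, s] ++ C) (A ++ [t, s, t] ++ C) A.length :=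
  braidMoveAt_iff.mpr ⟨s, t, braidMoveSpec_append A C h⟩

lemma exists_braidMoveAt {x : List B} {p : ℕ} {s t : B} (hM : M s t = 3)
    (h0 : x[p]? = some s) (h1 : x[p + 1]? = some t) (h2 : x[p + 2]? = some s) :
    ∃ y, BraidMoveAt M x y p :=
  ⟨_, s, t, hM, eq_take_append_triple_append_drop h0 h1 h2, rfl⟩

namespace BraidMoveSpec

variable {x y : List B} {p : ℕ} {s t : B}

lemma symm (d : BraidMoveSpec M x y p s t) : BraidMoveSpec M y x p t s where
  m_eq := by rw [M.symmetric]; exact d.m_eq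
  le_length := d.length_eq ▸ d.le_length
  length_eq := d.length_eq.symm
  hx0 := d.hy0
  hx1 := d.hy1
  hx2 := d.hy2
  hy0 := d.hx0
  hy1 := d.hx1
  hy2 := d.hx2
  outside i hi := (d.outside i hi).symm

lemma ne (d : BraidMoveSpec M x y p s t) : s ≠ t := by
  rintro rfl
  have := d.m_eq
  rw [M.diagonal] at this
  omega

end BraidMoveSpec

namespace BraidMoveAt

variable {x y : List B} {p : ℕ}

lemma symm (h : BraidMoveAt M x y p) : BraidMoveAt M y x p := by
  obtain ⟨s, t, d⟩ := braidMoveAt_iff.mp h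
  exact braidMoveAt_iff.mpr ⟨t, s, d.symm⟩

lemma length_eq (h : BraidMoveAt M x y p) : y.length = x.length := by
  obtain ⟨s, t, d⟩ := braidMoveAt_iff.mp h
  exact d.length_eq

lemma le_length (h : BraidMoveAt M x y p) : p + 3 ≤ x.length := by
  obtain ⟨s, t, d⟩ := braidMoveAt_iff.mp h
  exact d.le_length

lemma exists_eq (h : BraidMoveAt M x y p) :
    ∃ A C s t, M s t = 3 ∧ A.length = p ∧
      x = A ++ [s, t, s] ++ C ∧ y = A ++ [t, s, t] ++ C := by
  have hp := h.le_length
  obtain ⟨s, t, hM, hx, hy⟩ := h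
  exact ⟨_, _, s, t, hM, List.length_take_of_le (by omega), hx, hy⟩

lemma getElem?_eq (h : BraidMoveAt M x y p) {i : ℕ} (hi : i < p ∨ p + 2 < i) :
    y[i]? = x[i]? := by
  obtain ⟨s, t, d⟩ := braidMoveAt_iff.mp h
  exact d.outside i hi

lemma getElem?_ne (h : BraidMoveAt M x y p) {i : ℕ} (hi : p ≤ i ∧ i ≤ p + 2) :
    y[i]? ≠ x[i]? := by
  obtain ⟨s, t, d⟩ := braidMoveAt_iff.mp h
  obtain rfl | rfl | rfl : i = p ∨ i = p + 1 ∨ i = p + 2 := by omega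
  · rw [d.hx0, d.hy0]; exact fun e => d.ne (Option.some_inj.mp e).symm
  · rw [d.hx1, d.hy1]; exact fun e => d.ne (Option.some_inj.mp e)
  · rw [d.hx2, d.hy2]; exact fun e => d.ne (Option.some_inj.mp e).symm

lemma ne (h : BraidMoveAt M x y p) : x ≠ y := by
  rintro rfl
  exact h.getElem?_ne (i := p) (by omega) rfl

lemma unique {y' : List B} (h : BraidMoveAt M x y p) (h' : BraidMoveAt M x y' p) : y = y' := by
  obtain ⟨s, t, d⟩ := braidMoveAt_iff.mp h
  obtain ⟨s', t', d'⟩ := braidMoveAt_iff.mp h'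
  obtain rfl : s = s' := Option.some_inj.mp (d.hx0.symm.trans d'.hx0)
  obtain rfl : t = t' := Option.some_inj.mp (d.hx1.symm.trans d'.hx1)
  apply List.ext_getElem?
  intro i
  by_cases hi : i < p ∨ p + 2 < i
  · rw [d.outside i hi, d'.outside i hi]
  · obtain rfl | rfl | rfl : i = p ∨ i = p + 1 ∨ i = p + 2 := by omega
    exacts [d.hy0.trans d'.hy0.symm, d.hy1.trans d'.hy1.symm, d.hy2.trans d'.hy2.symm]

lemma append_right (h : BraidMoveAt M x y p) (L : List B) :
    BraidMoveAt M (x ++ L) (y ++ L) p := by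
  obtain ⟨A, C, s, t, hM, rfl, rfl, rfl⟩ := h.exists_eq
  simpa using braidMoveAt_append A (C ++ L) hM

lemma take (h : BraidMoveAt M x y p) {m : ℕ} (hm : p + 3 ≤ m) :
    BraidMoveAt M (x.take m) (y.take m) p := by
  obtain ⟨A, C, s, t, hM, rfl, rfl, rfl⟩ := h.exists_eq
  obtain ⟨k, rfl⟩ : ∃ k, m = A.length + 3 + k := ⟨m - (A.length + 3), by omega⟩
  have := braidMoveAt_append A (C.take k) hM
  simp only [List.append_assoc, List.take_append, List.length_cons, List.length_nil] at this ⊢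
  simpa [List.take_of_length_le (show A.length ≤ A.length + 3 + k by omega),
    show A.length + 3 + k - A.length = k + 3 by omega] using this

lemma take_eq (h : BraidMoveAt M x y p) : y.take p = x.take p := by
  obtain ⟨A, C, s, t, hM, rfl, rfl, rfl⟩ := h.exists_eq
  simp

lemma drop_eq (h : BraidMoveAt M x y p) {m : ℕ} (hm : p + 3 ≤ m) : x.drop m = y.drop m := by
  obtain ⟨A, C, s, t, hM, rfl, rfl, rfl⟩ := h.exists_eq
  obtain ⟨k, rfl⟩ : ∃ k, m = A.length + 3 + k := ⟨m - (A.length + 3), by omega⟩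
  simp [List.drop_append, show A.length + 3 + k - A.length = k + 3 by omega]

lemma shadowCenter (h : BraidMoveAt M x y p) : ShadowCenter M x (p + 2) := by
  obtain ⟨s, t, hM, hx, -⟩ := h
  exact ⟨by omega, s, t, hM, hx⟩

end BraidMoveAt

lemma shadowCenter_iff {z : List B} {c : ℕ} :
    ShadowCenter M z c ↔ 2 ≤ c ∧ ∃ y, BraidMoveAt M z y (c - 2) := by
  constructor
  · rintro ⟨hc, s, t, hM, hz⟩
    rw [show c + 1 = c - 2 + 3 by omega] at hz
    exact ⟨hc, _, s, t, hM, hz, rfl⟩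
  · rintro ⟨hc, y, hy⟩
    simpa [show c - 2 + 2 = c by omega] using hy.shadowCenter

section Coxeter

variable {W : Type*} [Group W] (cs : CoxeterSystem M W)

lemma BraidMoveAt.wordProd_eq {x y : List B} {p : ℕ} (h : BraidMoveAt M x y p) :
    cs.wordProd x = cs.wordProd y := by
  obtain ⟨A, C, s, t, hM, -, rfl, rfl⟩ := h.exists_eq
  have hbraid := cs.wordProd_braidWord_eq t s
  rw [CoxeterSystem.braidWord, CoxeterSystem.braidWord, M.symmetric t s, hM] at hbraid
  simp only [cs.wordProd_append]
  exact congrArg (_ * · * _) hbraid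

lemma BraidMoveAt.isReduced {x y : List B} {p : ℕ} (h : BraidMoveAt M x y p)
    (hx : cs.IsReduced x) : cs.IsReduced y := by
  rw [CoxeterSystem.IsReduced, ← h.wordProd_eq cs, h.length_eq]
  exact hx

lemma not_isReduced_of_infix {z L : List B} {i : ℕ} (hz : cs.IsReduced z)
    (hL : ¬ cs.IsReduced L) (h : ∀ j < L.length, z[i + j]? = L[j]?) : False :=
  hL (take_drop_eq_of_getElem? h ▸ (hz.drop i).take L.length)

lemma getElem?_succ_ne_of_isReduced {z : List B} {i : ℕ} {a : B} (hz : cs.IsReduced z)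
    (h0 : z[i]? = some a) : z[i + 1]? ≠ some a := fun h1 =>
  not_isReduced_of_infix cs hz (L := [a, a])
    (cs.not_isReduced_alternatingWord a a (m := 2) (by simp) (by simp)) fun j hj => by
      simp only [List.length_cons, List.length_nil] at hj
      interval_cases j
      exacts [h0, h1]

lemma getElem?_add_three_ne_of_isReduced {z : List B} {i : ℕ} {a b : B}
    (hz : cs.IsReduced z) (hM : M a b = 3) (h0 : z[i]? = some a) (h1 : z[i + 1]? = some b)
    (h2 : z[i + 2]? = some a) : z[i + 3]? ≠ some b := fun h3 =>
  not_isReduced_of_infix cs hz (L := [a, b, a, b])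
    (cs.not_isReduced_alternatingWord a b (m := 4) (by omega) (by omega)) fun j hj => by
      simp only [List.length_cons, List.length_nil] at hj
      interval_cases j
      exacts [h0, h1, h2, h3]

end Coxeter

lemma BraidMove.symm {x y : List B} (h : BraidMove M x y) : BraidMove M y x :=
  let ⟨p, hp⟩ := h; ⟨p, hp.symm⟩

namespace BraidEquiv

variable {x y : List B}

lemma symm (h : BraidEquiv M x y) : BraidEquiv M y x := by
  induction h with
  | refl => exact .refl
  | tail _ hm ih => exact .head hm.symm ih

lemma length_eq (h : BraidEquiv M x y) : y.length = x.length := by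
  induction h with
  | refl => rfl
  | tail _ hm ih => obtain ⟨p, hp⟩ := hm; rw [hp.length_eq, ih]

lemma isReduced {W : Type*} [Group W] {cs : CoxeterSystem M W} (h : BraidEquiv M x y)
    (hx : cs.IsReduced x) : cs.IsReduced y := by
  induction h with
  | refl => exact hx
  | tail _ hm ih => obtain ⟨p, hp⟩ := hm; exact hp.isReduced cs ih

end BraidEquiv

/-! ### Braid sequences -/

def MoveChain (M : CoxeterMatrix B) : List ℕ → List B → List B → Prop
  | [], x, y => x = y
  | p :: ps, x, y => ∃ z, BraidMoveAt M x z p ∧ MoveChain M ps z y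

namespace MoveChain

variable {ps qs : List ℕ} {x y : List B}

@[simp] lemma nil_iff : MoveChain M [] x y ↔ x = y := Iff.rfl

@[simp] lemma cons_iff {p : ℕ} :
    MoveChain M (p :: ps) x y ↔ ∃ z, BraidMoveAt M x z p ∧ MoveChain M ps z y := Iff.rfl

lemma append_iff :
    MoveChain M (ps ++ qs) x y ↔ ∃ z, MoveChain M ps x z ∧ MoveChain M qs z y := by
  induction ps generalizing x with
  | nil => simp
  | cons p ps ih =>
      simp only [List.cons_append, cons_iff, ih]
      exact ⟨fun ⟨z, hz, w, h₁, h₂⟩ => ⟨w, ⟨z, hz, h₁⟩, h₂⟩,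
        fun ⟨w, ⟨z, hz, h₁⟩, h₂⟩ => ⟨z, hz, w, h₁, h₂⟩⟩

lemma reverse (h : MoveChain M ps x y) : MoveChain M ps.reverse y x := by
  induction ps generalizing x with
  | nil => exact h.symm
  | cons p ps ih =>
      obtain ⟨z, hz, h⟩ := h
      rw [List.reverse_cons, append_iff]
      exact ⟨z, ih h, x, hz.symm, rfl⟩

lemma braidEquiv (h : MoveChain M ps x y) : BraidEquiv M x y := by
  induction ps generalizing x with
  | nil => exact h ▸ .refl
  | cons p ps ih =>
      obtain ⟨z, hz, h⟩ := h
      exact .head ⟨p, hz⟩ (ih h)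

lemma length_eq (h : MoveChain M ps x y) : y.length = x.length := h.braidEquiv.length_eq

lemma le_length (h : MoveChain M ps x y) : ∀ p ∈ ps, p + 3 ≤ x.length := by
  induction ps generalizing x with
  | nil => simp
  | cons q ps ih =>
      obtain ⟨z, hz, h⟩ := h
      simp only [List.mem_cons, forall_eq_or_imp]
      exact ⟨hz.le_length, hz.length_eq ▸ ih h⟩

lemma getElem?_eq {i : ℕ} (hps : ∀ p ∈ ps, i < p ∨ p + 2 < i) (h : MoveChain M ps x y) :
    y[i]? = x[i]? := by
  induction ps generalizing x with
  | nil => rw [h]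
  | cons p ps ih =>
      obtain ⟨z, hz, h⟩ := h
      simp only [List.mem_cons, forall_eq_or_imp] at hps
      rw [ih hps.2 h, hz.getElem?_eq hps.1]

lemma append_right (h : MoveChain M ps x y) (L : List B) :
    MoveChain M ps (x ++ L) (y ++ L) := by
  induction ps generalizing x with
  | nil => rw [h]; rfl
  | cons p ps ih =>
      obtain ⟨z, hz, h⟩ := h
      exact ⟨z ++ L, hz.append_right L, ih h⟩

lemma take {m : ℕ} (hps : ∀ p ∈ ps, p + 3 ≤ m) (h : MoveChain M ps x y) :
    MoveChain M ps (x.take m) (y.take m) := by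
  induction ps generalizing x with
  | nil => rw [h]; rfl
  | cons p ps ih =>
      obtain ⟨z, hz, h⟩ := h
      simp only [List.mem_cons, forall_eq_or_imp] at hps
      exact ⟨z.take m, hz.take hps.1, ih hps.2 h⟩

lemma drop_eq {m : ℕ} (hps : ∀ p ∈ ps, p + 3 ≤ m) (h : MoveChain M ps x y) :
    x.drop m = y.drop m := by
  induction ps generalizing x with
  | nil => rw [h]
  | cons p ps ih =>
      obtain ⟨z, hz, h⟩ := h
      simp only [List.mem_cons, forall_eq_or_imp] at hps
      rw [hz.drop_eq hps.1, ih hps.2 h]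

end MoveChain

lemma BraidEquiv.exists_moveChain {x y : List B} (h : BraidEquiv M x y) :
    ∃ ps, MoveChain M ps x y := by
  induction h with
  | refl => exact ⟨[], rfl⟩
  | tail _ hm ih =>
      obtain ⟨ps, hps⟩ := ih
      obtain ⟨p, hp⟩ := hm
      exact ⟨ps ++ [p], MoveChain.append_iff.mpr ⟨_, hps, _, hp, rfl⟩⟩

lemma exists_moveChain_of_walk {α : List B} {a b : braidClass M α}
    (w : (braidGraph M α).Walk a b) : ∃ ps, MoveChain M ps a.1 b.1 ∧ ps.length = w.length := by
  induction w with
  | nil => exact ⟨[], rfl, rfl⟩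
  | cons h _ ih =>
      obtain ⟨ps, hps, hlen⟩ := ih
      obtain ⟨-, ⟨q, hq⟩ | ⟨q, hq⟩⟩ := (SimpleGraph.fromRel_adj _ _ _).mp h
      · exact ⟨q :: ps, ⟨_, hq, hps⟩, by simp [hlen]⟩
      · exact ⟨q :: ps, ⟨_, hq.symm, hps⟩, by simp [hlen]⟩

lemma exists_walk_of_moveChain {α : List B} {ps : List ℕ} {a b : braidClass M α}
    (h : MoveChain M ps a.1 b.1) : ∃ w : (braidGraph M α).Walk a b, w.length = ps.length := by
  induction ps generalizing a with
  | nil => exact ⟨(Subtype.ext h : a = b) ▸ .nil, by cases (Subtype.ext h : a = b); rfl⟩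
  | cons q ps ih =>
      obtain ⟨z, hz, h⟩ := h
      have hzc : z ∈ braidClass M α := Relation.ReflTransGen.tail a.2 ⟨q, hz⟩
      obtain ⟨w, hw⟩ := ih (a := ⟨z, hzc⟩) h
      have hadj : (braidGraph M α).Adj a ⟨z, hzc⟩ :=
        (SimpleGraph.fromRel_adj _ _ _).mpr
          ⟨fun e => hz.ne (congrArg Subtype.val e), .inl ⟨q, hz⟩⟩
      exact ⟨.cons hadj w, by simp [hw]⟩

def EvenCentered (M : CoxeterMatrix B) (β : List B) : Prop :=
  ∀ z, BraidEquiv M β z → ∀ c, ShadowCenter M z c → Even c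

namespace EvenCentered

variable {β z : List B}

lemma of_braidEquiv (h : EvenCentered M β) (hz : BraidEquiv M β z) : EvenCentered M z :=
  fun y hy => h y (hz.trans hy)

lemma even_of_braidMoveAt (h : EvenCentered M β) {z : List B} {p : ℕ}
    (hm : BraidMoveAt M β z p) : Even p := by
  obtain ⟨k, hk⟩ := h β .refl _ hm.shadowCenter
  exact ⟨k - 1, by omega⟩

lemma even_of_moveChain (h : EvenCentered M β) {ps : List ℕ} (hc : MoveChain M ps β z) :
    ∀ p ∈ ps, Even p := by
  induction ps generalizing β with
  | nil => simp
  | cons q ps ih =>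
      obtain ⟨y, hy, hc⟩ := hc
      simp only [List.mem_cons, forall_eq_or_imp]
      exact ⟨h.even_of_braidMoveAt hy, ih (h.of_braidEquiv (.single ⟨q, hy⟩)) hc⟩

lemma take (h : EvenCentered M β) (m : ℕ) : EvenCentered M (β.take m) := by
  intro z hz c hc
  obtain ⟨ps, hps⟩ := hz.exists_moveChain
  have hlift := hps.append_right (β.drop m)
  rw [List.take_append_drop] at hlift
  obtain ⟨hc2, y, hy⟩ := shadowCenter_iff.mp hc
  exact h _ hlift.braidEquiv c (shadowCenter_iff.mpr ⟨hc2, _, hy.append_right _⟩)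

end EvenCentered

/-! ### Differing centers -/

/-- `p ∈ centerDiff u w` stands for the window at the 0-based positions `p, p + 1, p + 2` whose
center, the 1-based position `p + 2`, carries different letters in `u` and `w`. -/
noncomputable def centerDiff (u w : List B) : Finset ℕ :=
  (Finset.range u.length).filter fun p => Even p ∧ u[p + 1]? ≠ w[p + 1]?

lemma mem_centerDiff {u w : List B} {p : ℕ} :
    p ∈ centerDiff u w ↔ p < u.length ∧ Even p ∧ u[p + 1]? ≠ w[p + 1]? := by
  simp [centerDiff]

lemma centerDiff_comm {u w : List B} (h : u.length = w.length) :
    centerDiff u w = centerDiff w u := by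
  ext p
  simp only [mem_centerDiff, h, ne_comm]

lemma centerDiff_subset_union {u v w : List B} (h : v.length = u.length) :
    centerDiff u w ⊆ centerDiff u v ∪ centerDiff v w := by
  intro p hp
  rw [mem_centerDiff] at hp
  simp only [Finset.mem_union, mem_centerDiff, h]
  by_cases hv : u[p + 1]? = v[p + 1]?
  · exact .inr ⟨hp.1, hp.2.1, hv ▸ hp.2.2⟩
  · exact .inl ⟨hp.1, hp.2.1, hv⟩

lemma centerDiff_take_subset (u w : List B) (m : ℕ) :
    centerDiff (u.take m) (w.take m) ⊆ centerDiff u w := by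
  intro p hp
  rw [mem_centerDiff, List.getElem?_take, List.getElem?_take] at hp
  rw [mem_centerDiff]
  split_ifs at hp
  · exact ⟨by simp at hp; omega, hp.2.1, hp.2.2⟩
  · exact absurd rfl hp.2.2

lemma BraidMoveAt.centerDiff_subset {u v : List B} {q : ℕ} (h : BraidMoveAt M u v q)
    (hq : Even q) : centerDiff u v ⊆ {q} := by
  intro p hp
  rw [mem_centerDiff] at hp
  obtain ⟨-, ⟨a, ha⟩, hne⟩ := hp
  obtain ⟨b, hb⟩ := hq
  by_contra hpq
  exact hne (h.getElem?_eq (by simp at hpq; omega)).symm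

lemma MoveChain.card_centerDiff_le {ps : List ℕ} {u w : List B} (h : MoveChain M ps u w)
    (he : ∀ p ∈ ps, Even p) : (centerDiff u w).card ≤ ps.length := by
  induction ps generalizing u with
  | nil => rw [h]; simp [centerDiff]
  | cons q ps ih =>
      obtain ⟨z, hz, h⟩ := h
      simp only [List.mem_cons, forall_eq_or_imp] at he
      calc (centerDiff u w).card
          ≤ (centerDiff u z ∪ centerDiff z w).card :=
            Finset.card_le_card (centerDiff_subset_union hz.length_eq)
        _ ≤ (centerDiff u z).card + (centerDiff z w).card := Finset.card_union_le _ _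
        _ ≤ 1 + ps.length := by
            gcongr
            · exact (Finset.card_le_card (hz.centerDiff_subset he.1)).trans (by simp)
            · exact ih h he.2
        _ = (q :: ps).length := by simp [add_comm]

def IsTightChain (M : CoxeterMatrix B) (ps : List ℕ) (u w : List B) : Prop :=
  MoveChain M ps u w ∧ ps.Nodup ∧ ∀ p ∈ ps, p ∈ centerDiff u w

namespace IsTightChain

variable {ps : List ℕ} {u v w : List B}

lemma length_le (h : IsTightChain M ps u w) : ps.length ≤ (centerDiff u w).card := by
  rw [← List.toFinset_card_of_nodup h.2.1]
  exact Finset.card_le_card fun p hp => h.2.2 p (List.mem_toFinset.mp hp)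

lemma reverse (h : IsTightChain M ps u w) : IsTightChain M ps.reverse w u := by
  refine ⟨h.1.reverse, List.nodup_reverse.mpr h.2.1, fun p hp => ?_⟩
  rw [centerDiff_comm h.1.length_eq]
  exact h.2.2 p (List.mem_reverse.mp hp)

lemma cons {q : ℕ} (hm : BraidMoveAt M u v q) (hq : Even q) (h : IsTightChain M ps v w)
    (hqw : v[q + 1]? = w[q + 1]?) : IsTightChain M (q :: ps) u w := by
  have hmem : ∀ p ∈ ps, p ≠ q ∧ p ∈ centerDiff u w := by
    intro p hp
    obtain ⟨hpl, hpe, hpne⟩ := mem_centerDiff.mp (h.2.2 p hp)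
    have hpq : p ≠ q := by rintro rfl; exact hpne hqw
    refine ⟨hpq, mem_centerDiff.mpr ⟨hm.length_eq ▸ hpl, hpe, ?_⟩⟩
    obtain ⟨a, ha⟩ := hpe
    obtain ⟨b, hb⟩ := hq
    rwa [← hm.getElem?_eq (by omega)]
  refine ⟨⟨v, hm, h.1⟩, List.nodup_cons.mpr ⟨fun hq' => (hmem q hq').1 rfl, h.2.1⟩, ?_⟩
  simp only [List.mem_cons, forall_eq_or_imp]
  refine ⟨mem_centerDiff.mpr ⟨by have := hm.le_length; omega, hq, ?_⟩,
    fun p hp => (hmem p hp).2⟩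
  rw [← hqw]
  exact (hm.getElem?_ne (by omega)).symm

lemma of_take {m : ℕ} (h : IsTightChain M ps (u.take m) (w.take m))
    (hd : u.drop m = w.drop m) : IsTightChain M ps u w := by
  have hc := h.1.append_right (u.drop m)
  rw [List.take_append_drop, hd, List.take_append_drop] at hc
  exact ⟨hc, h.2.1, fun p hp => centerDiff_take_subset u w m (h.2.2 p hp)⟩

end IsTightChain

lemma MoveChain.getElem?_ne_of_nodup {ps : List ℕ} {u w : List B} {q i : ℕ}
    (h : MoveChain M ps u w) (hnd : ps.Nodup) (hq : q ∈ ps) (hi : q ≤ i ∧ i ≤ q + 2)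
    (hps : ∀ p ∈ ps, p ≠ q → i < p ∨ p + 2 < i) : w[i]? ≠ u[i]? := by
  obtain ⟨a, b, hqa, rfl, -⟩ := List.exists_erase_eq hq
  have hqb : q ∉ b := (List.nodup_cons.mp (List.Nodup.of_append_right hnd)).1
  obtain ⟨X, ha, X', hm, hb⟩ := MoveChain.append_iff.mp h
  rw [hb.getElem?_eq fun p hp => hps p (by simp [hp]) (by rintro rfl; exact hqb hp),
    ← ha.getElem?_eq fun p hp => hps p (by simp [hp]) (by rintro rfl; exact hqa hp)]
  exact hm.getElem?_ne hi

/-! ### The distance formula -/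

section

variable {W : Type*} [Group W] (cs : CoxeterSystem M W)

structure EvenReduced (n : ℕ) (u : List B) : Prop where
  length_eq : u.length = n
  isReduced : cs.IsReduced u
  evenCentered : EvenCentered M u

variable {cs}

lemma EvenReduced.of_braidEquiv {n : ℕ} {u z : List B} (hu : EvenReduced cs n u)
    (h : BraidEquiv M u z) : EvenReduced cs n z :=
  ⟨h.length_eq.trans hu.length_eq, h.isReduced hu.isReduced, hu.evenCentered.of_braidEquiv h⟩

lemma EvenReduced.take {n : ℕ} {u : List B} (hu : EvenReduced cs n u) {m : ℕ} (hm : m ≤ n) :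
    EvenReduced cs m (u.take m) :=
  ⟨by simp [hu.length_eq, hm], hu.isReduced.take m, hu.evenCentered.take m⟩

variable (cs) in
def TightChainsAt (n : ℕ) : Prop :=
  ∀ u w : List B, EvenReduced cs n u → BraidEquiv M u w → ∃ ps, IsTightChain M ps u w

variable {n : ℕ}

/- From here on `n` is the odd length of the words: the last window starts at `n - 3`, and all
other windows are *low*, i.e. avoid the last two letters (`p + 3 ≤ n - 2`). -/

lemma MoveChain.low_or_top (hodd : Odd n) {ps : List ℕ} {u w : List B}
    (hu : EvenReduced cs n u) (h : MoveChain M ps u w) :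
    ∀ p ∈ ps, p + 3 ≤ n - 2 ∨ p = n - 3 := by
  intro p hp
  obtain ⟨a, ha⟩ := hu.evenCentered.even_of_moveChain h p hp
  obtain ⟨k, hk⟩ := hodd
  have := h.le_length p hp
  rw [hu.length_eq] at this
  omega

lemma exists_eq_append_top {ps : List ℕ} (hps : ∀ p ∈ ps, p + 3 ≤ n - 2 ∨ p = n - 3)
    (hmem : n - 3 ∈ ps) : ∃ a b, ps = a ++ (n - 3) :: b ∧ ∀ p ∈ a, p + 3 ≤ n - 2 := by
  obtain ⟨a, b, hna, rfl, -⟩ := List.exists_erase_eq hmem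
  refine ⟨a, b, rfl, fun p hp => (hps p (by simp [hp])).resolve_right ?_⟩
  rintro rfl
  exact hna hp

lemma MoveChain.top_mem {ps : List ℕ} {u w : List B} (h : MoveChain M ps u w)
    (hps : ∀ p ∈ ps, p + 3 ≤ n - 2 ∨ p = n - 3) (hne : u[n - 2]? ≠ w[n - 2]?) :
    n - 3 ∈ ps := by
  by_contra hmem
  refine hne (h.getElem?_eq fun p hp => .inr ?_).symm
  have := (hps p hp).resolve_right (fun e => hmem (e ▸ hp))
  omega

lemma top_pair_eq {x x' y' y : List B} {ms : List ℕ} (hxlen : x.length = n)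
    (h₁ : BraidMoveAt M x x' (n - 3)) (hms : MoveChain M ms x' y')
    (hlow : ∀ p ∈ ms, p + 3 ≤ n - 2) (h₂ : BraidMoveAt M y' y (n - 3)) :
    y'[n - 3]? = x'[n - 3]? ∧ y.drop (n - 3) = x.drop (n - 3) := by
  obtain ⟨s, t, d₁⟩ := braidMoveAt_iff.mp h₁
  obtain ⟨s₂, t₂, d₂⟩ := braidMoveAt_iff.mp h₂
  have hn := d₁.le_length
  have hfix : ∀ i, n - 3 < i → y'[i]? = x'[i]? := fun i hi =>
    hms.getElem?_eq fun p hp => .inr (by have := hlow p hp; omega)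
  have hs₂ : s₂ = t := Option.some_inj.mp <| d₂.hx2.symm.trans <|
    (hfix _ (by omega)).trans d₁.hy2
  have ht₂ : t₂ = s := Option.some_inj.mp <| d₂.hx1.symm.trans <|
    (hfix _ (by omega)).trans d₁.hy1
  subst hs₂ ht₂
  refine ⟨d₂.hx0.trans d₁.hy0.symm, List.ext_getElem? fun j => ?_⟩
  rw [List.getElem?_drop, List.getElem?_drop]
  rcases j with _ | _ | _ | j
  · exact d₂.hy0.trans d₁.hx0.symm
  · exact d₂.hy1.trans d₁.hx1.symm
  · exact d₂.hy2.trans d₁.hx2.symm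
  · have hylen : y.length = n := by rw [d₂.length_eq, hms.length_eq, d₁.length_eq, hxlen]
    rw [List.getElem?_eq_none (by omega), List.getElem?_eq_none (by omega)]

lemma exists_low_moveChain_of_top_pair (hn : 5 ≤ n) (hodd : Odd n) (IH : TightChainsAt cs (n - 2))
    {x x' y' y : List B} {ms : List ℕ} (hx : EvenReduced cs n x)
    (h₁ : BraidMoveAt M x x' (n - 3)) (hms : MoveChain M ms x' y')
    (hlow : ∀ p ∈ ms, p + 3 ≤ n - 2) (h₂ : BraidMoveAt M y' y (n - 3)) :
    ∃ qs, MoveChain M qs x y ∧ qs.length ≤ ms.length := by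
  have hx' : EvenReduced cs n x' := hx.of_braidEquiv (.single ⟨_, h₁⟩)
  obtain ⟨htop, hdrop⟩ := top_pair_eq hx.length_eq h₁ hms hlow h₂
  have hmid : MoveChain M ms (x'.take (n - 2)) (y'.take (n - 2)) := hms.take hlow
  obtain ⟨ps, hps⟩ := IH _ _ (hx'.take (by omega)) hmid.braidEquiv
  have hbound : ∀ p ∈ ps, p + 3 ≤ n - 2 := fun p hp => by
    have := hps.1.le_length p hp
    simp only [List.length_take, hx'.length_eq] at this
    omega
  have heven : ∀ p ∈ ps, Even p := fun p hp => (mem_centerDiff.mp (hps.2.2 p hp)).2.1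
  -- the move at `n - 5` would be the only one changing the letter at `n - 3`
  have hn5 : n - 5 ∉ ps := by
    intro hmem
    refine hps.1.getElem?_ne_of_nodup hps.2.1 hmem (i := n - 3) (by omega) (fun p hp hpne => ?_) ?_
    · obtain ⟨a, ha⟩ := heven p hp
      obtain ⟨k, hk⟩ := hodd
      have := hbound p hp
      omega
    · rw [List.getElem?_take, List.getElem?_take, if_pos (by omega), if_pos (by omega), htop]
  have hdeep : ∀ p ∈ ps, p + 3 ≤ n - 3 := fun p hp => by
    obtain ⟨a, ha⟩ := heven p hp
    obtain ⟨k, hk⟩ := hodd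
    have := hbound p hp
    have : p ≠ n - 5 := fun e => hn5 (e ▸ hp)
    omega
  have hlift := (hps.1.take hdeep).append_right (x.drop (n - 3))
  rw [List.take_take, List.take_take, min_eq_left (by omega), h₁.take_eq, ← h₂.take_eq,
    List.take_append_drop, ← hdrop, List.take_append_drop] at hlift
  refine ⟨ps, hlift, ?_⟩
  calc ps.length ≤ (centerDiff (x'.take (n - 2)) (y'.take (n - 2))).card := hps.length_le
    _ ≤ ms.length := hmid.card_centerDiff_le (hx'.evenCentered.even_of_moveChain hms)

lemma exists_low_moveChain (hn : 5 ≤ n) (hodd : Odd n) (IH : TightChainsAt cs (n - 2))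
    {u w : List B} (hu : EvenReduced cs n u) (hside : u[n - 2]? = w[n - 2]?) {ps : List ℕ}
    (h : MoveChain M ps u w) : ∃ qs, MoveChain M qs u w ∧ ∀ p ∈ qs, p + 3 ≤ n - 2 := by
  induction hl : ps.length using Nat.strong_induction_on generalizing ps with
  | _ k ih =>
  by_cases hlow : ∀ p ∈ ps, p + 3 ≤ n - 2
  · exact ⟨ps, h, hlow⟩
  have hps := h.low_or_top hodd hu
  obtain ⟨p₀, hp₀, hp₀low⟩ := not_forall₂.mp hlow
  obtain ⟨a, b, rfl, ha⟩ :=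
    exists_eq_append_top hps ((hps p₀ hp₀).resolve_left hp₀low ▸ hp₀)
  obtain ⟨X, hua, X', hX, hb⟩ := MoveChain.append_iff.mp h
  have hbps : ∀ p ∈ b, p + 3 ≤ n - 2 ∨ p = n - 3 := fun p hp => hps p (by simp [hp])
  have hmemb : n - 3 ∈ b := by
    refine hb.top_mem hbps fun e => hX.getElem?_ne (i := n - 2) (by omega) ?_
    rw [e, ← hside, hua.getElem?_eq fun p hp => .inr (by have := ha p hp; omega)]
  obtain ⟨c, d, rfl, hc⟩ := exists_eq_append_top hbps hmemb
  obtain ⟨Y', hcY, Y, hY, hd⟩ := MoveChain.append_iff.mp hb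
  obtain ⟨qs, hqs, hqslen⟩ := exists_low_moveChain_of_top_pair hn hodd IH
    (hu.of_braidEquiv hua.braidEquiv) hX hcY hc hY
  refine ih _ ?_
    (MoveChain.append_iff.mpr ⟨X, hua, MoveChain.append_iff.mpr ⟨Y, hqs, hd⟩⟩) rfl
  simp only [List.length_append, List.length_cons] at hl ⊢
  omega

lemma exists_tightChain_of_getElem?_eq (hn : 5 ≤ n) (hodd : Odd n)
    (IH : TightChainsAt cs (n - 2)) {u w : List B} (hu : EvenReduced cs n u)
    (huw : BraidEquiv M u w) (hside : u[n - 2]? = w[n - 2]?) : ∃ ps, IsTightChain M ps u w := by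
  obtain ⟨ps₀, h₀⟩ := huw.exists_moveChain
  obtain ⟨qs, hqs, hlow⟩ := exists_low_moveChain hn hodd IH hu hside h₀
  obtain ⟨ps, hps⟩ := IH _ _ (hu.take (m := n - 2) (by omega)) (hqs.take hlow).braidEquiv
  exact ⟨ps, hps.of_take (hqs.drop_eq hlow)⟩

lemma exists_braidMoveAt_top (hn : 3 ≤ n) {z : List B} {a b : B} (hM : M a b = 3)
    (h₃ : z[n - 3]? = some a) (h₂ : z[n - 2]? = some b) (h₁ : z[n - 1]? = some a) :
    ∃ v, BraidMoveAt M z v (n - 3) ∧ v[n - 2]? = some a := by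
  obtain ⟨v, hv⟩ := exists_braidMoveAt (p := n - 3) hM h₃
    (by rwa [show n - 3 + 1 = n - 2 by omega]) (by rwa [show n - 3 + 2 = n - 1 by omega])
  obtain ⟨s, t, d⟩ := braidMoveAt_iff.mp hv
  refine ⟨v, hv, ?_⟩
  rw [show n - 2 = n - 3 + 1 by omega, d.hy1]
  exact congrArg some (Option.some_inj.mp (d.hx0.symm.trans h₃))

lemma exists_tightChain_of_braidMoveAt_top (hn : 5 ≤ n) (hodd : Odd n)
    (IH : TightChainsAt cs (n - 2)) {u v w : List B} (hu : EvenReduced cs n u)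
    (hm : BraidMoveAt M u v (n - 3)) (huw : BraidEquiv M u w) (hside : v[n - 2]? = w[n - 2]?) :
    ∃ ps, IsTightChain M ps u w := by
  have huv : BraidEquiv M u v := .single ⟨_, hm⟩
  obtain ⟨ps, hps⟩ :=
    exists_tightChain_of_getElem?_eq hn hodd IH (hu.of_braidEquiv huv) (huv.symm.trans huw) hside
  obtain ⟨k, hk⟩ := hodd
  exact ⟨_, hps.cons hm ⟨k - 1, by omega⟩ (by rwa [show n - 3 + 1 = n - 2 by omega])⟩

def LastFour (z : List B) (n : ℕ) (a b c d : B) : Prop :=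
  z[n - 4]? = some a ∧ z[n - 3]? = some b ∧ z[n - 2]? = some c ∧ z[n - 1]? = some d

def TailForm (M : CoxeterMatrix B) (ρ e f : B) (n : ℕ) (z : List B) : Prop :=
  LastFour z n ρ e f e ∨ (LastFour z n e ρ f e ∧ M ρ e = 3)

lemma TailForm.getElem?_sub_two {ρ e f : B} {z : List B} (h : TailForm M ρ e f n z) :
    z[n - 2]? = some f := by
  rcases h with h | ⟨h, -⟩ <;> exact h.2.2.1

lemma TailForm.braidMoveAt (hn : 5 ≤ n) (hodd : Odd n) {ρ e f : B} (hρe : ρ ≠ e)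
    {z z' : List B} {p : ℕ} (hz : z.length = n) (ht : TailForm M ρ e f n z)
    (hm : BraidMoveAt M z z' p) (hp : Even p) :
    TailForm M ρ e f n z' ∨ TailForm M ρ f e n z' := by
  obtain ⟨s, t, d⟩ := braidMoveAt_iff.mp hm
  have hp3 := d.le_length
  obtain ⟨k, rfl⟩ : ∃ k, n = k + 5 := ⟨n - 5, by omega⟩
  simp only [TailForm, LastFour, show k + 5 - 4 = k + 1 by omega, show k + 5 - 3 = k + 2 by omega,
    show k + 5 - 2 = k + 3 by omega, show k + 5 - 1 = k + 4 by omega] at ht ⊢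
  obtain hp | hp | hdeep : p = k + 2 ∨ p = k ∨ p + 3 ≤ k + 1 := by
    obtain ⟨a, ha⟩ := hp
    obtain ⟨b, hb⟩ := hodd
    omega
  · subst p
    have hk1 : z'[k + 1]? = z[k + 1]? := d.outside _ (.inl (by omega))
    rcases ht with ⟨h4, h3, h2, h1⟩ | ⟨⟨h4, h3, h2, h1⟩, -⟩
    · obtain rfl : s = e := Option.some_inj.mp (d.hx0.symm.trans h3)
      obtain rfl : t = f := Option.some_inj.mp (d.hx1.symm.trans h2)
      exact .inr (.inl ⟨hk1.trans h4, d.hy0, d.hy1, d.hy2⟩)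
    · exact absurd (Option.some_inj.mp (h3.symm.trans (d.hx0.trans (d.hx2.symm.trans h1)))) hρe
  · subst p
    have hk3 : z'[k + 3]? = z[k + 3]? := d.outside _ (.inr (by omega))
    have hk4 : z'[k + 4]? = z[k + 4]? := d.outside _ (.inr (by omega))
    rcases ht with ⟨h4, h3, h2, h1⟩ | ⟨⟨h4, h3, h2, h1⟩, -⟩
    · obtain rfl : t = ρ := Option.some_inj.mp (d.hx1.symm.trans h4)
      obtain rfl : s = e := Option.some_inj.mp (d.hx2.symm.trans h3)
      exact .inl (.inr ⟨⟨d.hy1, d.hy2, hk3.trans h2, hk4.trans h1⟩, d.symm.m_eq⟩)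
    · obtain rfl : t = e := Option.some_inj.mp (d.hx1.symm.trans h4)
      obtain rfl : s = ρ := Option.some_inj.mp (d.hx2.symm.trans h3)
      exact .inl (.inl ⟨d.hy1, d.hy2, hk3.trans h2, hk4.trans h1⟩)
  · have h : ∀ i, k + 1 ≤ i → z'[i]? = z[i]? := fun i hi => d.outside i (.inr (by omega))
    rw [h _ le_rfl, h (k + 2) (by omega), h (k + 3) (by omega), h (k + 4) (by omega)]
    exact .inl ht

def TailForms (M : CoxeterMatrix B) (ρ e f : B) (n : ℕ) (z : List B) : Prop :=
  TailForm M ρ e f n z ∨ TailForm M ρ f e n z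

lemma TailForms.of_braidEquiv (hn : 5 ≤ n) (hodd : Odd n) {ρ e f : B} (hρe : ρ ≠ e)
    (hρf : ρ ≠ f) {z₀ z : List B} (hlen : z₀.length = n) (hev : EvenCentered M z₀)
    (ht : TailForms M ρ e f n z₀) (h : BraidEquiv M z₀ z) : TailForms M ρ e f n z := by
  induction h with
  | refl => exact ht
  | @tail y z hy hm ih =>
      obtain ⟨p, hm⟩ := hm
      have hylen : y.length = n := (BraidEquiv.length_eq hy).trans hlen
      have hp : Even p := (hev.of_braidEquiv hy).even_of_braidMoveAt hm
      rcases ih with ht | ht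
      · exact ht.braidMoveAt hn hodd hρe hylen hm hp
      · exact (ht.braidMoveAt hn hodd hρf hylen hm hp).symm

lemma exists_tailForms (hn : 5 ≤ n) (hodd : Odd n) {Z Z' : List B} (hZ : EvenReduced cs n Z)
    (hm : BraidMoveAt M Z Z' (n - 3)) : ∃ ρ e f, M e f = 3 ∧ ρ ≠ e ∧ ρ ≠ f ∧
      ∀ z, BraidEquiv M Z z → TailForms M ρ e f n z := by
  have hZlen := hZ.length_eq
  obtain ⟨k, rfl⟩ : ∃ k, n = k + 5 := ⟨n - 5, by omega⟩
  rw [show k + 5 - 3 = k + 2 by omega] at hm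
  obtain ⟨e, f, d⟩ := braidMoveAt_iff.mp hm
  set ρ := Z[k + 1]'(by omega)
  have h₄ : Z[k + 1]? = some ρ := List.getElem?_eq_getElem _
  have hρe : ρ ≠ e := fun hρ =>
    getElem?_succ_ne_of_isReduced cs hZ.isReduced h₄ (by rw [hρ]; exact d.hx0)
  have hρf : ρ ≠ f := fun hρ => getElem?_add_three_ne_of_isReduced cs hZ.isReduced
    (by rw [M.symmetric]; exact d.m_eq) (hρ ▸ h₄) d.hx0 d.hx1 d.hx2
  refine ⟨ρ, e, f, d.m_eq, hρe, hρf, fun z hz => ?_⟩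
  refine TailForms.of_braidEquiv hn hodd hρe hρf hZlen hZ.evenCentered (.inl (.inl ?_)) hz
  simp only [LastFour, show k + 5 - 4 = k + 1 by omega, show k + 5 - 3 = k + 2 by omega,
    show k + 5 - 2 = k + 3 by omega, show k + 5 - 1 = k + 4 by omega]
  exact ⟨h₄, d.hx0, d.hx1, d.hx2⟩

lemma exists_tightChain_of_tailForm (hTF : TriangleFree M) (hn : 5 ≤ n) (hodd : Odd n)
    (IH : TightChainsAt cs (n - 2)) {ρ e f : B} (hef : M e f = 3) {u w : List B}
    (hu : EvenReduced cs n u) (huw : BraidEquiv M u w) (hut : TailForm M ρ e f n u)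
    (hwt : TailForms M ρ e f n w) (hne : u[n - 2]? ≠ w[n - 2]?) :
    ∃ ps, IsTightChain M ps u w := by
  have hw : EvenReduced cs n w := hu.of_braidEquiv huw
  have hwt : TailForm M ρ f e n w :=
    hwt.resolve_left fun h => hne (hut.getElem?_sub_two.trans h.getElem?_sub_two.symm)
  have hfe : M f e = 3 := by rw [M.symmetric]; exact hef
  rcases hut with ⟨-, h₃, h₂, h₁⟩ | ⟨hu4, hρe⟩
  · obtain ⟨v, hv, hv₂⟩ := exists_braidMoveAt_top (by omega) hef h₃ h₂ h₁
    exact exists_tightChain_of_braidMoveAt_top hn hodd IH hu hv huw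
      (hv₂.trans hwt.getElem?_sub_two.symm)
  · rcases hwt with ⟨-, h₃, h₂, h₁⟩ | ⟨-, hρf⟩
    · obtain ⟨v, hv, hv₂⟩ := exists_braidMoveAt_top (by omega) hfe h₃ h₂ h₁
      obtain ⟨ps, hps⟩ := exists_tightChain_of_braidMoveAt_top hn hodd IH hw hv huw.symm
        (hv₂.trans hu4.2.2.1.symm)
      exact ⟨_, hps.reverse⟩
    · exact absurd ⟨.inr hρe.ge, .inr hef.ge, .inr hρf.ge⟩ (hTF ρ e f)

lemma exists_tightChain_of_getElem?_ne (hTF : TriangleFree M) (hn : 5 ≤ n) (hodd : Odd n)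
    (IH : TightChainsAt cs (n - 2)) {u w : List B} (hu : EvenReduced cs n u)
    (huw : BraidEquiv M u w) (hne : u[n - 2]? ≠ w[n - 2]?) : ∃ ps, IsTightChain M ps u w := by
  obtain ⟨ps, h⟩ := huw.exists_moveChain
  have hps := h.low_or_top hodd hu
  obtain ⟨a, b, rfl, -⟩ := exists_eq_append_top hps (h.top_mem hps hne)
  obtain ⟨Z, haZ, Z', hZ, -⟩ := MoveChain.append_iff.mp h
  obtain ⟨ρ, e, f, hef, -, -, hforms⟩ :=
    exists_tailForms hn hodd (hu.of_braidEquiv haZ.braidEquiv) hZ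
  have hform : ∀ z, BraidEquiv M u z → TailForms M ρ e f n z :=
    fun z hz => hforms z (haZ.braidEquiv.symm.trans hz)
  rcases hform u .refl with hut | hut
  · exact exists_tightChain_of_tailForm hTF hn hodd IH hef hu huw hut (hform w huw) hne
  · exact exists_tightChain_of_tailForm hTF hn hodd IH (by rw [M.symmetric]; exact hef) hu huw
      hut (hform w huw).symm hne

lemma MoveChain.eq_or_braidMoveAt {ps : List ℕ} {x y : List B} {q : ℕ}
    (h : MoveChain M ps x y) (hps : ∀ p ∈ ps, p = q) : x = y ∨ BraidMoveAt M x y q := by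
  induction ps generalizing x with
  | nil => exact .inl h
  | cons p ps ih =>
      obtain ⟨z, hz, h⟩ := h
      simp only [List.mem_cons, forall_eq_or_imp] at hps
      obtain ⟨rfl, hps⟩ := hps
      rcases ih h hps with rfl | hzy
      · exact .inr hz
      · exact .inl (hzy.unique hz.symm).symm

lemma exists_tightChain_of_length_le_three {u w : List B} (hu : u.length ≤ 3)
    (huw : BraidEquiv M u w) : ∃ ps, IsTightChain M ps u w := by
  obtain ⟨ps, h⟩ := huw.exists_moveChain
  have hnil : IsTightChain M [] w w := ⟨rfl, List.nodup_nil, by simp⟩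
  rcases h.eq_or_braidMoveAt (q := 0) fun p hp => (by have := h.le_length p hp; omega) with rfl | hm
  · exact ⟨[], hnil⟩
  · exact ⟨[0], hnil.cons hm ⟨0, rfl⟩ rfl⟩

variable (cs) in
theorem tightChainsAt_of_odd (hTF : TriangleFree M) {n : ℕ} (hodd : Odd n) :
    TightChainsAt cs n := by
  induction n using Nat.strong_induction_on with
  | _ n IH =>
  intro u w hu huw
  obtain hn | hn : n ≤ 3 ∨ 5 ≤ n := by obtain ⟨k, hk⟩ := hodd; omega
  · exact exists_tightChain_of_length_le_three (hu.length_eq ▸ hn) huw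
  have IH' : TightChainsAt cs (n - 2) :=
    IH _ (by omega) (by obtain ⟨k, hk⟩ := hodd; exact ⟨k - 1, by omega⟩)
  by_cases hside : u[n - 2]? = w[n - 2]?
  · exact exists_tightChain_of_getElem?_eq hn hodd IH' hu huw hside
  · exact exists_tightChain_of_getElem?_ne hTF hn hodd IH' hu huw hside

theorem braidGraph_dist_eq (hTF : TriangleFree M) {α : List B} (hα : cs.IsReduced α)
    (hodd : Odd α.length) (hev : EvenCentered M α) (u v : braidClass M α) :
    (braidGraph M α).dist u v = (centerDiff u.1 v.1).card := by
  have hu : EvenReduced cs α.length u.1 := EvenReduced.of_braidEquiv ⟨rfl, hα, hev⟩ u.2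
  obtain ⟨ps, hps⟩ := tightChainsAt_of_odd cs hTF hodd u.1 v.1 hu (u.2.symm.trans v.2)
  obtain ⟨w₀, hw₀⟩ := exists_walk_of_moveChain hps.1
  apply le_antisymm
  · exact (SimpleGraph.dist_le w₀).trans (hw₀ ▸ hps.length_le)
  · obtain ⟨w, hw⟩ := (SimpleGraph.Walk.reachable w₀).exists_walk_length_eq_dist
    obtain ⟨qs, hqs, hlen⟩ := exists_moveChain_of_walk w
    rw [← hw, ← hlen]
    exact hqs.card_centerDiff_le (hu.evenCentered.even_of_moveChain hqs)

lemma card_centerDiff_add_two_le {u x v : List B} (hx : x.length = u.length) {p : ℕ}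
    (hux : p ∈ centerDiff u x) (hxv : p ∈ centerDiff x v) (huv : u[p + 1]? = v[p + 1]?) :
    (centerDiff u v).card + 2 ≤ (centerDiff u x).card + (centerDiff x v).card := by
  have hp : p ∉ centerDiff u v := fun h => (mem_centerDiff.mp h).2.2 huv
  have hsub : insert p (centerDiff u v) ⊆ centerDiff u x ∪ centerDiff x v :=
    Finset.insert_subset (Finset.mem_union_left _ hux) (centerDiff_subset_union hx)
  have hinter : 1 ≤ (centerDiff u x ∩ centerDiff x v).card :=
    Finset.card_pos.mpr ⟨p, Finset.mem_inter.mpr ⟨hux, hxv⟩⟩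
  have := Finset.card_le_card hsub
  rw [Finset.card_insert_of_notMem hp] at this
  have := Finset.card_union_add_card_inter (centerDiff u x) (centerDiff x v)
  omega

theorem graphConvex_setOf_getElem?_eq (hTF : TriangleFree M) {α : List B}
    (hα : cs.IsReduced α) (hodd : Odd α.length) (hev : EvenCentered M α) {p : ℕ} (hp : Even p)
    (hpl : p < α.length) (o : Option B) :
    GraphConvex (braidGraph M α) {y | y.1[p + 1]? = o} := by
  intro u hu v hv w hw x hx
  by_contra hxo
  simp only [Set.mem_ofPred_eq] at hu hv hxo
  obtain ⟨ps₁, h₁, hl₁⟩ := exists_moveChain_of_walk (w.takeUntil x hx)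
  obtain ⟨ps₂, h₂, hl₂⟩ := exists_moveChain_of_walk (w.dropUntil x hx)
  have hsum : ps₁.length + ps₂.length = w.length := by
    rw [hl₁, hl₂, ← SimpleGraph.Walk.length_append, w.take_spec hx]
  have hlen : ∀ z : braidClass M α, z.1.length = α.length := fun z => z.2.length_eq
  have key := card_centerDiff_add_two_le (u := u.1) (x := x.1) (v := v.1) (p := p)
    ((hlen x).trans (hlen u).symm)
    (mem_centerDiff.mpr ⟨(hlen u).symm ▸ hpl, hp, by rw [hu]; exact Ne.symm hxo⟩)
    (mem_centerDiff.mpr ⟨(hlen x).symm ▸ hpl, hp, by rw [hv]; exact hxo⟩) (hu.trans hv.symm)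
  have hc₁ := h₁.card_centerDiff_le ((hev.of_braidEquiv u.2).even_of_moveChain h₁)
  have hc₂ := h₂.card_centerDiff_le ((hev.of_braidEquiv x.2).even_of_moveChain h₂)
  have hd := braidGraph_dist_eq (cs := cs) hTF hα hodd hev u v
  omega

end

/-! ### Links -/

lemma classCenters_eq_empty_of_length_le_two {α : List B} (h : α.length ≤ 2) :
    classCenters M α = ∅ := by
  refine Set.eq_empty_of_forall_notMem fun c ⟨β, hβ, hc⟩ => ?_
  obtain ⟨-, y, hy⟩ := shadowCenter_iff.mp hc
  have := hy.le_length
  rw [BraidEquiv.length_eq hβ] at this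
  omega

lemma ncard_setOf_even (k : ℕ) : {c | Even c ∧ 2 ≤ c ∧ c + 1 ≤ 2 * k + 1}.ncard = k := by
  have he : {c | Even c ∧ 2 ≤ c ∧ c + 1 ≤ 2 * k + 1} =
      ↑((Finset.range k).image fun j => 2 * j + 2) := by
    ext c
    simp only [Set.mem_ofPred_eq, Finset.coe_image, Set.mem_image, Finset.mem_coe,
      Finset.mem_range]
    constructor
    · rintro ⟨⟨t, ht⟩, h₂, h₃⟩
      exact ⟨t - 1, by omega, by omega⟩
    · rintro ⟨j, hj, rfl⟩
      exact ⟨⟨j + 1, by omega⟩, by omega, by omega⟩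
  rw [he, Set.ncard_coe_finset, Finset.card_image_of_injective _ fun a b h => by omega,
    Finset.card_range]

lemma count_setOf_even {k j : ℕ} (hj : j ≤ k) :
    Nat.count (· ∈ {c | Even c ∧ 2 ≤ c ∧ c + 1 ≤ 2 * k + 1}) (2 * j + 2) = j := by
  induction j with
  | zero => simp [Nat.count_succ]
  | succ j ih =>
      rw [show 2 * (j + 1) + 2 = 2 * j + 2 + 1 + 1 by ring, Nat.count_succ, Nat.count_succ,
        ih (by omega), if_pos ⟨⟨j + 1, by omega⟩, by omega, by omega⟩,
        if_neg fun ⟨⟨t, ht⟩, _⟩ => by omega]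

lemma nth_setOf_even {k r : ℕ} (h₁ : 1 ≤ r) (h₂ : r ≤ k) :
    Nat.nth (· ∈ {c | Even c ∧ 2 ≤ c ∧ c + 1 ≤ 2 * k + 1}) (r - 1) = 2 * r := by
  have hcount := count_setOf_even (k := k) (j := r - 1) (by omega)
  rw [show 2 * (r - 1) + 2 = 2 * r by omega] at hcount
  rw [← hcount]
  exact Nat.nth_count ⟨⟨r, by omega⟩, by omega, by omega⟩

lemma IsLink.exists_classCenters_eq {α : List B} (hlink : IsLink M α)
    (hr : 1 ≤ braidDim M α) : ∃ k, α.length = 2 * k + 1 ∧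
      classCenters M α = {c | Even c ∧ 2 ≤ c ∧ c + 1 ≤ 2 * k + 1} := by
  rcases hlink.2 with h | ⟨⟨k, hk⟩, hE⟩
  · rw [braidDim, classCenters_eq_empty_of_length_le_two (by omega)] at hr
    simp at hr
  · exact ⟨k, hk, hk ▸ hE⟩

theorem sigbar_last_convex_of_link_general
    {B W : Type*} [Group W] (M : CoxeterMatrix B) (cs : CoxeterSystem M W)
    (hM : TypeLambda M) (α : List B) (hα : cs.IsReduced α)
    (hlink : IsLink M α) (hr : 2 ≤ braidDim M α)
    (σ : List B) :
    GraphConvex (braidGraph M α) (sigbar M α σ (braidDim M α)) ∧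
    ∀ τ : List B, EdgeLabeled M α σ τ (braidDim M α) →
      GraphConvex (braidGraph M α) (sigbar M α τ (braidDim M α)) := by
  obtain ⟨k, hk, hE⟩ := hlink.exists_classCenters_eq (by omega)
  have hdim : braidDim M α = k := by rw [braidDim, hE, ncard_setOf_even]
  have hev : EvenCentered M α := fun z hz c hc => by
    have hc : c ∈ classCenters M α := ⟨z, hz, hc⟩
    rw [hE] at hc
    exact hc.1
  have hsig : ∀ x, sig M α x (braidDim M α) = x[2 * k - 2 + 1]? := fun x => by
    rw [sig, nthCenter, hE, hdim, nth_setOf_even (by omega) le_rfl,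
      show 2 * k - 1 = 2 * k - 2 + 1 by omega]
  have hconv := graphConvex_setOf_getElem?_eq hM.2 hα ⟨k, hk⟩ hev (p := 2 * k - 2)
    ⟨k - 1, by omega⟩ (by omega)
  refine ⟨?_, fun τ _ => ?_⟩ <;> simpa only [sigbar, hsig] using hconv _

theorem sigbar_last_convex_of_link
    {B W : Type*} [Group W] (M : CoxeterMatrix B) (cs : CoxeterSystem M W)
    (hM : TypeLambda M) (α : List B) (hα : cs.IsReduced α)
    (hlink : IsLink M α) (hr : 2 ≤ braidDim M α)
    (σ : List B) (hσ : BraidEquiv M α σ)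
    (h1 : ShadowCenter M σ (2 * braidDim M α - 2))
    (h2 : ShadowCenter M σ (2 * braidDim M α)) :
    GraphConvex (braidGraph M α) (sigbar M α σ (braidDim M α)) ∧
    ∀ τ : List B, EdgeLabeled M α σ τ (braidDim M α) →
      GraphConvex (braidGraph M α) (sigbar M α τ (braidDim M α)) :=
  sigbar_last_convex_of_link_general M cs hM α hα hlink hr σ

end Braid
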